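/- arXiv:0805.2422 — 2 statements merged into one kernel-verified Lean document; each statement's English description precedes it below -/
import Mathlib

section
/- Let G₁,…,G_K be complex matrices with G_k of size P×N_k, let N = ∑_{k=1}^{K} N_k, define Σ₁ = I_P, Σ_{k+1} = Σ_k + G_k G_kᴴ, and J_k = I_{N_k} + G_kᴴ Σ_k⁻¹ G_k, with R_k the upper-triangular Cholesky factor of J_k and 𝒾 = log₂ det(I_P + ∑_{k=1}^{K} G_k G_kᴴ). Then equality (1/N) ∑_{k=1}^{K} ∑_{j=1}^{N_k} ([R_k]_{jj})⁻² = 2^{-𝒾/N} holds if and only if, for every k, all diagonal entries of R_k are equal and det(J_k) = 2^{(N_k/N)·𝒾}. -/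
/-!
Under successive cancellation `Σ_{k+1} = Σ_k + G_k G_kᴴ`, and the matrix determinant lemma gives
`det Σ_{k+1} = det Σ_k · det J_k`; telescoping, `2^𝒾 = ∏_k det J_k = ∏_{k,j} [R_k]_{jj}²`.
So the `N` numbers `[R_k]_{jj}⁻²` have geometric mean `2^{-𝒾/N}`, and by the equality case of
AM–GM their arithmetic mean attains it exactly when they are all equal. Read block by block, this
is equality of the diagonal entries of each `R_k` together with `det J_k = 2^{N_k 𝒾 / N}`.
-/

open Matrix
open scoped ComplexOrder

namespace Fin

@[to_additive]
theorem last_eq_mul_prod {M : Type*} [CommMonoid M] {n : ℕ} (f : Fin (n + 1) → M)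
    (g : Fin n → M) (h : ∀ i, f i.succ = f i.castSucc * g i) :
    f (last n) = f 0 * ∏ i, g i := by
  induction n with
  | zero => simp
  | succ n ih =>
    have h' : ∀ i : Fin n, f i.succ.castSucc = f i.castSucc.castSucc * g i.castSucc :=
      fun i => by rw [← succ_castSucc, h]
    rw [← succ_last, h, ← castSucc_zero, prod_univ_castSucc, ← mul_assoc]
    exact congrArg (· * g (last n)) (ih (f ∘ castSucc) (g ∘ castSucc) h')

end Fin

namespace Matrix

theorem det_conjTranspose_mul_self_of_blockTriangular {n : Type*} [Fintype n] [DecidableEq n]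
    [LinearOrder n] {R : Matrix n n ℂ} (hR : R.BlockTriangular id) (hreal : ∀ j, (R j j).im = 0) :
    (Rᴴ * R).det = ((∏ j, (R j j).re ^ 2 : ℝ) : ℂ) := by
  have hdiag : R.det = ((∏ j, (R j j).re : ℝ) : ℂ) := by
    rw [det_of_isUpperTriangular hR]
    push_cast
    exact Finset.prod_congr rfl fun j _ => Complex.ext rfl (by simp [hreal j])
  rw [det_mul, det_conjTranspose, hdiag, Complex.star_def, Complex.conj_ofReal,
    ← Complex.ofReal_mul, ← Finset.prod_mul_distrib]
  simp only [sq]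

theorem det_one_add_sum_mul_conjTranspose {𝕜 m : Type*} [RCLike 𝕜] [Fintype m] [DecidableEq m]
    {K : ℕ} {n : Fin K → Type*} [∀ k, Fintype (n k)] [∀ k, DecidableEq (n k)]
    (G : ∀ k, Matrix m (n k) 𝕜) (S : Fin (K + 1) → Matrix m m 𝕜) (h0 : S 0 = 1)
    (hS : ∀ k, S k.succ = S k.castSucc + G k * (G k)ᴴ) :
    (1 + ∑ k, G k * (G k)ᴴ).det = ∏ k, (1 + (G k)ᴴ * (S k.castSucc)⁻¹ * G k).det := by
  have hpos : ∀ k, (S k).PosDef := Fin.induction (h0 ▸ PosDef.one) fun k ih =>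
    hS k ▸ ih.add_posSemidef (posSemidef_self_mul_conjTranspose _)
  have hstep : ∀ k, (S k.succ).det
      = (S k.castSucc).det * (1 + (G k)ᴴ * (S k.castSucc)⁻¹ * G k).det := fun k => by
    rw [hS, det_add_mul _ _ ((isUnit_iff_isUnit_det _).mp (hpos _).isUnit)]
  rw [← h0, ← Fin.last_eq_add_sum S _ hS]
  simpa [h0] using Fin.last_eq_mul_prod (fun k => (S k).det) _ hstep

end Matrix

theorem Fintype.forall_eq_iff_forall_eq_and_prod_eq_pow_card {R : Type*} [CommMonoidWithZero R]
    [LinearOrder R] [PosMulStrictMono R] [MulPosMono R] {ι : Type*} [Fintype ι] {x : ι → R} {g : R}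
    (hx : ∀ i, 0 ≤ x i) (hg : 0 ≤ g) :
    (∀ i, x i = g) ↔ (∀ i j, x i = x j) ∧ ∏ i, x i = g ^ Fintype.card ι := by
  refine ⟨fun h => ⟨fun i j => (h i).trans (h j).symm, by simp [h]⟩, fun ⟨hconst, hprod⟩ i => ?_⟩
  have hcard : Fintype.card ι ≠ 0 := (Fintype.card_pos_iff.mpr ⟨i⟩).ne'
  refine (pow_left_inj₀ (hx i) hg hcard).mp ?_
  rw [← hprod, ← Finset.card_univ, ← Finset.prod_const]
  exact Finset.prod_congr rfl fun j _ => hconst i j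

theorem Real.sum_eq_card_mul_iff_forall_eq_of_prod_eq_pow {ι : Type*} [Fintype ι] {x : ι → ℝ}
    {g : ℝ} (hx : ∀ i, 0 ≤ x i) (hg : 0 ≤ g) (hprod : ∏ i, x i = g ^ Fintype.card ι) :
    ∑ i, x i = Fintype.card ι * g ↔ ∀ i, x i = g := by
  refine ⟨fun hsum i => ?_, fun h => by simp [h]⟩
  have hcard : Fintype.card ι ≠ 0 := (Fintype.card_pos_iff.mpr ⟨i⟩).ne'
  have hmean : ∑ j, (Fintype.card ι : ℝ)⁻¹ * x j = g := by
    rw [← Finset.mul_sum, hsum, inv_mul_cancel_left₀ (by exact_mod_cast hcard)]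
  have hgeom : ∏ j, x j ^ (Fintype.card ι : ℝ)⁻¹ = g := by
    rw [Real.finsetProd_rpow _ _ fun j _ => hx j, hprod, Real.pow_rpow_inv_natCast hg hcard]
  have hw : ∑ _j : ι, (Fintype.card ι : ℝ)⁻¹ = 1 := by
    simp [mul_inv_cancel₀ (Nat.cast_ne_zero.mpr hcard : (Fintype.card ι : ℝ) ≠ 0)]
  have := (Real.geom_mean_eq_arith_mean_weighted_iff_of_pos' Finset.univ _ x
    (fun _ _ => by positivity) hw fun j _ => hx j).mp (hgeom.trans hmean.symm) i
    (Finset.mem_univ i)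
  rwa [hmean] at this

theorem Real.sum_sum_eq_card_mul_iff_of_prod_prod_eq_pow {κ : Type*} [Fintype κ]
    {ι : κ → Type*} [∀ k, Fintype (ι k)] {x : ∀ k, ι k → ℝ} {g : ℝ} (hx : ∀ k i, 0 ≤ x k i)
    (hg : 0 ≤ g) (hprod : ∏ k, ∏ i, x k i = g ^ ∑ k, Fintype.card (ι k)) :
    ∑ k, ∑ i, x k i = (∑ k, Fintype.card (ι k) : ℕ) * g ↔
      ∀ k, (∀ i j, x k i = x k j) ∧ ∏ i, x k i = g ^ Fintype.card (ι k) := by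
  rw [← Fintype.card_sigma] at hprod ⊢
  rw [Finset.prod_sigma', Finset.univ_sigma_univ] at hprod
  rw [Finset.sum_sigma', Finset.univ_sigma_univ,
    sum_eq_card_mul_iff_forall_eq_of_prod_eq_pow (fun p => hx _ _) hg hprod]
  exact Sigma.forall.trans <| forall_congr' fun k =>
    Fintype.forall_eq_iff_forall_eq_and_prod_eq_pow_card (hx k) hg

/-- In the successive-cancellation model (`Σ 0 = I_P`,
`Σ (k+1) = Σ k + G k (G k)ᴴ`, `J k = I + (G k)ᴴ (Σ k)⁻¹ (G k)`), with `R k` the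
upper-triangular Cholesky factor of `J k` and `𝒾 = log₂ det (I_P + ∑ k, G k (G k)ᴴ)`,
the average-MSE lower bound `2 ^ (-𝒾/N)` is attained, i.e.
`(1/N) ∑ k ∑ j, ([R k] j j)⁻² = 2 ^ (-𝒾/N)`, if and only if for every `k` all diagonal
entries of `R k` are equal and `det (J k) = 2 ^ ((N k / N) * 𝒾)`. -/
theorem avg_mse_eq_iff_uniform_information {P K : ℕ} (N : Fin K → ℕ)
    (G : ∀ k : Fin K, Matrix (Fin P) (Fin (N k)) ℂ)
    (Sig : Fin (K + 1) → Matrix (Fin P) (Fin P) ℂ)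
    (hSig0 : Sig 0 = 1)
    (hSigS : ∀ k : Fin K, Sig k.succ = Sig k.castSucc + G k * (G k)ᴴ)
    (J : ∀ k : Fin K, Matrix (Fin (N k)) (Fin (N k)) ℂ)
    (hJ : ∀ k : Fin K, J k = 1 + (G k)ᴴ * (Sig k.castSucc)⁻¹ * G k)
    (R : ∀ k : Fin K, Matrix (Fin (N k)) (Fin (N k)) ℂ)
    (hfact : ∀ k, J k = (R k)ᴴ * R k)
    (hTri : ∀ k, (R k).BlockTriangular id)
    (hdiag : ∀ k, ∀ j, ((R k) j j).im = 0 ∧ 0 < ((R k) j j).re)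
    (Ntot : ℕ) (hNtot : Ntot = ∑ k, N k) (hNpos : 0 < Ntot)
    (Info : ℝ)
    (hInfo : Info = Real.logb 2 ((1 + ∑ k, G k * (G k)ᴴ).det).re) :
    (1 / Ntot) * (∑ k, ∑ j, (((R k) j j).re) ^ (-2 : ℤ)) = (2 : ℝ) ^ (-(Info / Ntot)) ↔
      ∀ k, (∀ i j, (R k) i i = (R k) j j) ∧
        (J k).det = (((2 : ℝ) ^ (((N k : ℝ) / Ntot) * Info) : ℝ) : ℂ) := by
  have hdetJ : ∀ k, (J k).det = ((∏ j, (R k j j).re ^ 2 : ℝ) : ℂ) := fun k => by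
    rw [hfact k]
    exact det_conjTranspose_mul_self_of_blockTriangular (hTri k) fun j => (hdiag k j).1
  have htwo_rpow_info : (2 : ℝ) ^ Info = ∏ k, ∏ j, (R k j j).re ^ 2 := by
    have hpos : 0 < ∏ k, ∏ j, (R k j j).re ^ 2 :=
      Finset.prod_pos fun k _ => Finset.prod_pos fun j _ => pow_pos (hdiag k j).2 2
    rw [hInfo, det_one_add_sum_mul_conjTranspose G Sig hSig0 hSigS]
    simp only [← hJ, hdetJ]
    rw [← Complex.ofReal_prod, Complex.ofReal_re, Real.rpow_logb two_pos (by norm_num) hpos]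
  set g : ℝ := (2 : ℝ) ^ (-(Info / Ntot))
  have hgpow : ∀ m : ℕ, g ^ m = ((2 : ℝ) ^ ((m : ℝ) / Ntot * Info))⁻¹ := fun m => by
    rw [← Real.rpow_natCast, ← Real.rpow_mul zero_le_two, ← Real.rpow_neg zero_le_two]
    ring_nf
  have hinv : ∀ k, ∏ j, (R k j j).re ^ (-2 : ℤ) = (∏ j, (R k j j).re ^ 2)⁻¹ := by
    simp [Finset.prod_inv_distrib]
  have hNtot' : ∑ k, Fintype.card (Fin (N k)) = Ntot := by simpa using hNtot.symm
  have hprod : ∏ k, ∏ j, (R k j j).re ^ (-2 : ℤ) = g ^ ∑ k, Fintype.card (Fin (N k)) := by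
    rw [hNtot', hgpow, div_self (Nat.cast_ne_zero.mpr hNpos.ne'), one_mul, htwo_rpow_info]
    simp only [hinv, Finset.prod_inv_distrib]
  have hamgm := Real.sum_sum_eq_card_mul_iff_of_prod_prod_eq_pow
    (fun k j => zpow_nonneg (hdiag k j).2.le _) (Real.rpow_nonneg zero_le_two _) hprod
  rw [hNtot'] at hamgm
  rw [one_div_mul_eq_div, div_eq_iff (by positivity), mul_comm g, hamgm]
  refine forall_congr' fun k => and_congr (forall₂_congr fun i j => ?_) ?_
  · rw [zpow_left_inj₀ (hdiag k i).2.le (hdiag k j).2.le (by norm_num), Complex.ext_iff,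
      (hdiag k i).1, (hdiag k j).1]
    simp
  · rw [hdetJ, Complex.ofReal_inj, Fintype.card_fin, hgpow, hinv, _root_.inv_inj]
end

section
/- Let A be an M×M Hermitian positive semidefinite complex matrix with eigenvalue decomposition A = U Λ Uᴴ, eigenvalues λ₁ ≥ … ≥ λ_M ≥ 0 in nonincreasing order, let 𝒾 > 0, let N be a positive integer, and let r be the largest integer such that λ_n > (∏_{i=1}^{r} λ_i / 2^{𝒾})^{1/r} for all n ≤ r. Define Γ = diag(γ₁,…,γ_N) by: if N ≤ r, γ_n = (2^{𝒾}/∏_{i=1}^{N} λ_i)^{1/N} − λ_n⁻¹ for n ≤ N; if N > r, γ_n = (2^{𝒾}/∏_{i=1}^{r} λ_i)^{1/r} − λ_n⁻¹ for n ≤ r and γ_n = 0 for r < n ≤ N. Let U_N be the first N columns of U and S any N×N unitary matrix. Then T = U_N Γ^{1/2} S satisfies log₂ det(I_N + Tᴴ A T) = 𝒾, and among all M×N complex matrices T' with log₂ det(I_N + T'ᴴ A T') = 𝒾 it minimizes tr(T'ᴴ T'). -/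
/-!
Weak duality for the power-minimisation problem. For any `T'`, put `W = Uᴴ T'` and
`R = Λ^{1/2} W Wᴴ Λ^{1/2}`: then `det (1 + T'ᴴ A T') = det (1 + R)`, `R` is positive semidefinite
of rank at most `N`, and `R_mm = λ_m ‖W_m‖²`. Diagonalising `R = V Θ Vᴴ`, the weights `|V_mn|²`
form a doubly stochastic matrix; splitting each `log (1 + θ_n)` along its column and using the
tangent bound `log (1 + θ) ≤ θ / (λ μ) + g (λ μ)`, with `g` the conjugate of `log (1 + ·)`, gives
`log det (1 + T'ᴴ A T') ≤ tr (T'ᴴ T') / μ + ∑_{n < N} g (λ_n μ)`; only the `N` largest `λ_n`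
appear because at most `N` of the `θ_n` are nonzero and `g` is monotone. For the water-filling
loading `γ_n = (μ - 1/λ_n)⁺` every tangent bound is tight, so the right-hand side equals
`log det (1 + Tᴴ A T) + (tr (T'ᴴ T') - tr (Tᴴ T)) / μ`. The threshold `r` only identifies the
water level `μ` at which `∏ (1 + γ_n λ_n) = 2^𝒾`.
-/

open Matrix BigOperators
open scoped ComplexOrder
open Finset Real

/-- `waterfillingDual t = ⨆ θ ≥ 0, log (1 + θ) - θ / t`, attained at `θ = t - 1` when `t > 1`. -/
noncomputable def waterfillingDual (t : ℝ) : ℝ := if t ≤ 1 then 0 else log t - 1 + t⁻¹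

lemma waterfillingDual_nonneg (t : ℝ) : 0 ≤ waterfillingDual t := by
  unfold waterfillingDual
  split_ifs with h
  · rfl
  · linarith [one_sub_inv_le_log_of_pos (by linarith : (0:ℝ) < t)]

lemma waterfillingDual_monotone : Monotone waterfillingDual := by
  intro a b hab
  unfold waterfillingDual
  split_ifs with ha hb hb
  · rfl
  · linarith [one_sub_inv_le_log_of_pos (by linarith : (0:ℝ) < b)]
  · linarith
  · have ha0 : 0 < a := by linarith
    have hb0 : 0 < b := by linarith
    have hlog : 1 - a / b ≤ log b - log a := by
      rw [← log_div hb0.ne' ha0.ne']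
      simpa using one_sub_inv_le_log_of_pos (div_pos hb0 ha0)
    have hinv : a⁻¹ - b⁻¹ ≤ 1 - a / b := by
      rw [inv_sub_inv ha0.ne' hb0.ne', one_sub_div hb0.ne', div_le_div_iff₀ (by positivity) hb0]
      nlinarith [mul_nonneg (sub_nonneg.mpr hab) (by linarith : (0:ℝ) ≤ a - 1)]
    linarith

lemma log_one_add_le_div_add_waterfillingDual {t θ : ℝ} (ht : 0 < t) (hθ : 0 ≤ θ) :
    log (1 + θ) ≤ θ / t + waterfillingDual t := by
  unfold waterfillingDual
  split_ifs with h
  · have : θ ≤ θ / t := (le_div_iff₀ ht).mpr (by nlinarith)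
    linarith [log_le_sub_one_of_pos (by linarith : 0 < 1 + θ)]
  · have key := log_le_sub_one_of_pos (x := (1 + θ) / t) (by positivity)
    rw [log_div (by positivity) ht.ne', add_div, one_div] at key
    linarith

/-- `(μ - l⁻¹)⁺`, tested as `1 < l * μ` so that a zero gain (where `0⁻¹ = 0`) gets no power. -/
noncomputable def waterfill (μ l : ℝ) : ℝ := if 1 < l * μ then μ - l⁻¹ else 0

lemma waterfill_nonneg {μ : ℝ} (hμ : 0 ≤ μ) (l : ℝ) : 0 ≤ waterfill μ l := by
  unfold waterfill
  split_ifs with h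
  · have hl : 0 < l := pos_of_mul_pos_left (one_pos.trans h) hμ
    rw [show μ - l⁻¹ = (l * μ - 1) / l by field_simp]
    exact div_nonneg (by linarith) hl.le
  · rfl

lemma one_add_waterfill_mul (μ l : ℝ) : 1 + waterfill μ l * l = max 1 (l * μ) := by
  unfold waterfill
  split_ifs with h
  · have hl : l ≠ 0 := by rintro rfl; simp at h; linarith
    rw [max_eq_right h.le]
    field_simp
    ring
  · rw [zero_mul, add_zero, max_eq_left (not_lt.mp h)]

lemma waterfillingDual_mul_eq {μ : ℝ} (hμ : 0 < μ) (l : ℝ) :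
    waterfillingDual (l * μ) = log (1 + waterfill μ l * l) - waterfill μ l / μ := by
  unfold waterfillingDual waterfill
  split_ifs with h1 h2 h2
  · linarith
  · simp
  · have hl0 : 0 < l := pos_of_mul_pos_left (by linarith) hμ.le
    rw [show 1 + (μ - l⁻¹) * l = l * μ by field_simp; ring]
    field_simp
    ring
  · linarith

lemma sum_filter_val_lt_eq_sum_castLE {M N : ℕ} (hNM : N ≤ M) {β : Type*} [AddCommMonoid β]
    (f : Fin M → β) : ∑ m : Fin M with m.val < N, f m = ∑ n : Fin N, f (Fin.castLE hNM n) := by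
  rw [← Fin.coe_castLEEmb hNM, ← sum_map univ (Fin.castLEEmb hNM)]
  congr 1
  ext m
  simp only [mem_filter, mem_univ, true_and, mem_map, Fin.coe_castLEEmb]
  exact ⟨fun h => ⟨⟨m, h⟩, rfl⟩, by rintro ⟨n, rfl⟩; exact n.2⟩

lemma sum_mul_le_sum_castLE_of_antitone {M N : ℕ} (hNM : N ≤ M) {v t : Fin M → ℝ}
    (hv : Antitone v) (hv0 : ∀ m, 0 ≤ v m) (ht : ∀ m, t m ∈ Set.Icc 0 1)
    (htN : ∑ m, t m ≤ N) :
    ∑ m, t m * v m ≤ ∑ n : Fin N, v (Fin.castLE hNM n) := by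
  obtain ⟨c, hc0, hc_lt, hc_ge⟩ : ∃ c, 0 ≤ c ∧ (∀ m : Fin M, ↑m < N → c ≤ v m) ∧
      ∀ m : Fin M, N ≤ ↑m → v m ≤ c := by
    rcases hNM.lt_or_eq with h | h
    · exact ⟨v ⟨N, h⟩, hv0 _, fun m hm => hv (Fin.mk_le_of_le_val hm.le),
        fun m hm => hv (Fin.le_def.mpr hm)⟩
    · exact ⟨0, le_rfl, fun m _ => hv0 m, fun m hm => absurd m.2 (by omega)⟩
  let e : Fin M → ℝ := fun m => if ↑m < N then 1 else 0
  -- `c` separates the first `N` values of `v` from the rest: moving weight from the tail to the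
  -- head at price `c` never decreases the sum.
  have hpt : ∀ m, t m * v m ≤ e m * v m + (t m - e m) * c := by
    intro m
    by_cases hm : ↑m < N
    · simp only [e, if_pos hm]
      nlinarith [mul_nonneg (sub_nonneg.mpr (ht m).2) (sub_nonneg.mpr (hc_lt m hm))]
    · simp only [e, if_neg hm]
      nlinarith [mul_nonneg (ht m).1 (sub_nonneg.mpr (hc_ge m (not_lt.mp hm)))]
  have he : ∀ f : Fin M → ℝ, ∑ m, e m * f m = ∑ n : Fin N, f (Fin.castLE hNM n) := fun f => by
    simp only [e, ite_mul, one_mul, zero_mul, ← sum_filter]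
    exact sum_filter_val_lt_eq_sum_castLE hNM f
  have hN : ∑ m, e m = N := by simpa using he 1
  calc ∑ m, t m * v m ≤ ∑ m, (e m * v m + (t m - e m) * c) := sum_le_sum fun m _ => hpt m
    _ = ∑ n : Fin N, v (Fin.castLE hNM n) + (∑ m, t m - N) * c := by
      rw [sum_add_distrib, ← sum_mul, sum_sub_distrib, he, hN]
    _ ≤ ∑ n : Fin N, v (Fin.castLE hNM n) := by nlinarith

lemma mul_log_one_add_le {c θ l μ : ℝ} (hc : 0 ≤ c) (hθ : 0 ≤ θ) (hl : 0 ≤ l) (hμ : 0 < μ)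
    (hker : l = 0 → c * θ = 0) :
    c * log (1 + θ) ≤ c * θ / l / μ + c * waterfillingDual (l * μ) := by
  rcases hl.eq_or_lt with rfl | hl
  · rcases mul_eq_zero.mp (hker rfl) with rfl | rfl <;> simp [waterfillingDual]
  · have := mul_le_mul_of_nonneg_left
      (log_one_add_le_div_add_waterfillingDual (mul_pos hl hμ) hθ) hc
    calc c * log (1 + θ) ≤ c * (θ / (l * μ) + waterfillingDual (l * μ)) := this
      _ = c * θ / l / μ + c * waterfillingDual (l * μ) := by ring

theorem sum_log_one_add_le_of_mem_doublyStochastic {M N : ℕ} (hNM : N ≤ M)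
    {lam θ : Fin M → ℝ} {c : Fin M → Fin M → ℝ} {μ : ℝ} (hlam : Antitone lam)
    (hlam0 : ∀ m, 0 ≤ lam m) (hμ : 0 < μ) (hc : of c ∈ doublyStochastic ℝ (Fin M))
    (hθ : ∀ n, 0 ≤ θ n) (hθN : #{n | θ n ≠ 0} ≤ N)
    (hker : ∀ m, lam m = 0 → ∑ n, c m n * θ n = 0) :
    ∑ n, log (1 + θ n) ≤ (∑ m, (∑ n, c m n * θ n) / lam m) / μ
      + ∑ n : Fin N, waterfillingDual (lam (Fin.castLE hNM n) * μ) := by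
  set s : Finset (Fin M) := {n | θ n ≠ 0}
  obtain ⟨hc0, hrow, hcol⟩ : (∀ m n, 0 ≤ c m n) ∧ (∀ m, ∑ n, c m n = 1) ∧ ∀ n, ∑ m, c m n = 1 :=
    mem_doublyStochastic_iff_sum.mp hc
  have hoff : ∀ n ∉ s, θ n = 0 := by simp [s]
  have hcθ : ∀ m n, lam m = 0 → c m n * θ n = 0 := fun m n h =>
    (sum_eq_zero_iff_of_nonneg fun n _ => mul_nonneg (hc0 m n) (hθ n)).mp (hker m h) n
      (mem_univ n)
  have hsupp : ∀ m, ∑ n ∈ s, c m n * θ n = ∑ n, c m n * θ n := fun m =>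
    sum_subset (subset_univ s) fun n _ hn => by rw [hoff n hn, mul_zero]
  have ht : ∀ m, ∑ n ∈ s, c m n ∈ Set.Icc 0 1 := fun m =>
    ⟨sum_nonneg fun n _ => hc0 m n, hrow m ▸
      sum_le_sum_of_subset_of_nonneg (subset_univ s) fun n _ _ => hc0 m n⟩
  have htN : ∑ m, ∑ n ∈ s, c m n ≤ N := by
    calc ∑ m, ∑ n ∈ s, c m n = ∑ n ∈ s, ∑ m, c m n := sum_comm
      _ = #s := by simp [hcol]
      _ ≤ N := by exact_mod_cast hθN
  calc ∑ n, log (1 + θ n) = ∑ n ∈ s, ∑ m, c m n * log (1 + θ n) := by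
        rw [← sum_subset (subset_univ s) fun n _ hn => by rw [hoff n hn, add_zero, log_one]]
        exact sum_congr rfl fun n _ => by rw [← sum_mul, hcol, one_mul]
    _ ≤ ∑ n ∈ s, ∑ m, (c m n * θ n / lam m / μ + c m n * waterfillingDual (lam m * μ)) :=
        sum_le_sum fun n _ => sum_le_sum fun m _ =>
          mul_log_one_add_le (hc0 m n) (hθ n) (hlam0 m) hμ (hcθ m n)
    _ = (∑ m, (∑ n, c m n * θ n) / lam m) / μ
          + ∑ m, (∑ n ∈ s, c m n) * waterfillingDual (lam m * μ) := by
        simp only [sum_add_distrib, ← hsupp, sum_div, sum_mul]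
        rw [sum_comm, sum_comm (f := fun n m => c m n * waterfillingDual (lam m * μ))]
    _ ≤ _ := add_le_add le_rfl (sum_mul_le_sum_castLE_of_antitone hNM
          (fun _ _ h => waterfillingDual_monotone (mul_le_mul_of_nonneg_right (hlam h) hμ.le))
          (fun m => waterfillingDual_nonneg _) ht htN)

section
variable {𝕜 : Type*} [RCLike 𝕜] {l m n : Type*}

lemma mul_conjTranspose_apply_self [Fintype n] (A : Matrix m n 𝕜) (i : m) :
    (A * Aᴴ) i i = ∑ j, (‖A i j‖ ^ 2 : 𝕜) := by
  simp [mul_apply, RCLike.mul_conj]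

lemma conjTranspose_mul_apply_self [Fintype m] (A : Matrix m n 𝕜) (j : n) :
    (Aᴴ * A) j j = ∑ i, (‖A i j‖ ^ 2 : 𝕜) := by
  simp [mul_apply, RCLike.conj_mul]

lemma re_trace_conjTranspose_mul_self [Fintype m] [Fintype n] (A : Matrix m n 𝕜) :
    RCLike.re (Aᴴ * A).trace = ∑ i, ∑ j, ‖A i j‖ ^ 2 := by
  rw [trace, sum_comm]
  simp [conjTranspose_mul_apply_self]

lemma norm_sq_mem_doublyStochastic_of_mem_unitaryGroup [Fintype n] [DecidableEq n]
    {U : Matrix n n 𝕜} (hU : U ∈ unitaryGroup n 𝕜) :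
    of (fun i j => ‖U i j‖ ^ 2) ∈ doublyStochastic ℝ n := by
  refine mem_doublyStochastic_iff_sum.mpr
    ⟨fun i j => by simp only [of_apply]; positivity, fun i => ?_, fun j => ?_⟩
  · have := mul_conjTranspose_apply_self U i
    rw [← star_eq_conjTranspose, mem_unitaryGroup_iff.mp hU, one_apply_eq] at this
    exact_mod_cast this.symm
  · have := conjTranspose_mul_apply_self U j
    rw [← star_eq_conjTranspose, mem_unitaryGroup_iff'.mp hU, one_apply_eq] at this
    exact_mod_cast this.symm

lemma Matrix.IsHermitian.apply_self_eq_sum [Fintype n] [DecidableEq n] {A : Matrix n n 𝕜}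
    (hA : A.IsHermitian) (i : n) :
    A i i = ∑ j, (‖hA.eigenvectorUnitary i j‖ ^ 2 * hA.eigenvalues j : ℝ) := by
  conv_lhs => rw [hA.spectral_theorem]
  rw [Unitary.conjStarAlgAut_apply, mul_apply]
  push_cast
  refine sum_congr rfl fun j _ => ?_
  rw [mul_diagonal, star_apply, RCLike.star_def, ← RCLike.mul_conj, Function.comp_apply]
  ring

lemma Matrix.IsHermitian.det_one_add [Fintype n] [DecidableEq n] {A : Matrix n n 𝕜}
    (hA : A.IsHermitian) :
    (1 + A).det = ∏ i, (1 + (hA.eigenvalues i : 𝕜)) := by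
  conv_lhs => rw [hA.spectral_theorem, Unitary.conjStarAlgAut_apply, Matrix.mul_assoc,
    det_one_add_mul_comm, Matrix.mul_assoc, Unitary.coe_star_mul_self, Matrix.mul_one]
  rw [← diagonal_one, diagonal_add, det_diagonal]
  rfl

lemma conjTranspose_submatrix_mul_mul_submatrix [Fintype m] (U B : Matrix m m 𝕜) (e : l → m) :
    (U.submatrix id e)ᴴ * B * U.submatrix id e = (Uᴴ * B * U).submatrix e e := by
  rw [submatrix_mul _ _ _ id _ Function.bijective_id,
    submatrix_mul _ _ _ id _ Function.bijective_id]
  rfl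

lemma det_one_add_conjTranspose_mul_mul_of_mem_unitaryGroup [Fintype n] [DecidableEq n]
    {S : Matrix n n 𝕜} (hS : S ∈ unitaryGroup n 𝕜) (B : Matrix n n 𝕜) :
    (1 + Sᴴ * B * S).det = (1 + B).det := by
  rw [Matrix.mul_assoc, det_one_add_mul_comm, Matrix.mul_assoc, ← star_eq_conjTranspose,
    mem_unitaryGroup_iff.mp hS, Matrix.mul_one]

lemma trace_conjTranspose_mul_mul_of_mem_unitaryGroup [Fintype n] [DecidableEq n]
    {S : Matrix n n 𝕜} (hS : S ∈ unitaryGroup n 𝕜) (B : Matrix n n 𝕜) :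
    (Sᴴ * B * S).trace = B.trace := by
  rw [Matrix.mul_assoc, trace_mul_comm, Matrix.mul_assoc, ← star_eq_conjTranspose,
    mem_unitaryGroup_iff.mp hS, Matrix.mul_one]

end

lemma conjTranspose_mul_diagonal_mul_eq {m n : Type*} [Fintype m] [DecidableEq m] {lam : m → ℝ}
    (hlam : ∀ i, 0 ≤ lam i) (W : Matrix m n ℂ) :
    Wᴴ * diagonal (fun i => (lam i : ℂ)) * W
      = (diagonal (fun i => (√(lam i) : ℂ)) * W)ᴴ * (diagonal (fun i => (√(lam i) : ℂ)) * W) := by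
  simp only [conjTranspose_mul, diagonal_conjTranspose, Matrix.mul_assoc,
    ← Matrix.mul_assoc (diagonal _), diagonal_mul_diagonal]
  congr
  ext i
  simp [← Complex.ofReal_mul, Real.mul_self_sqrt (hlam i)]

theorem log_det_one_add_le {M N : ℕ} (hNM : N ≤ M) {lam : Fin M → ℝ} {μ : ℝ}
    (hlam : Antitone lam) (hlam0 : ∀ m, 0 ≤ lam m) (hμ : 0 < μ)
    (W : Matrix (Fin M) (Fin N) ℂ) :
    log (1 + Wᴴ * diagonal (fun m => (lam m : ℂ)) * W).det.re ≤
      (Wᴴ * W).trace.re / μ + ∑ n : Fin N, waterfillingDual (lam (Fin.castLE hNM n) * μ) := by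
  set X : Matrix (Fin M) (Fin N) ℂ := diagonal (fun m => (√(lam m) : ℂ)) * W
  have hR : (X * Xᴴ).PosSemidef := posSemidef_self_mul_conjTranspose X
  set θ := hR.isHermitian.eigenvalues
  have hdiag : ∀ m, ∑ n, ‖hR.isHermitian.eigenvectorUnitary m n‖ ^ 2 * θ n
      = lam m * ∑ j, ‖W m j‖ ^ 2 := fun m => by
    have h := (hR.isHermitian.apply_self_eq_sum m).symm.trans (mul_conjTranspose_apply_self X m)
    norm_cast at h
    rw [h]
    simp only [X, diagonal_mul, norm_mul, mul_pow, Complex.norm_real, Real.norm_eq_abs, sq_abs,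
      Real.sq_sqrt (hlam0 m), ← mul_sum]
  have hlog : log (1 + Xᴴ * X).det.re = ∑ n, log (1 + θ n) := by
    rw [det_one_add_mul_comm, hR.isHermitian.det_one_add]
    change log (∏ n, (1 + (θ n : ℂ))).re = _
    rw [show ∏ n, (1 + (θ n : ℂ)) = ((∏ n, (1 + θ n) : ℝ) : ℂ) by push_cast; rfl,
      Complex.ofReal_re, log_prod fun n _ => by linarith [hR.eigenvalues_nonneg n]]
  have hrank : #{n | θ n ≠ 0} ≤ N := by
    have := hR.isHermitian.rank_eq_card_non_zero_eigs
    rw [Fintype.card_subtype] at this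
    exact this ▸ (rank_mul_le_left X Xᴴ).trans (rank_le_width X)
  have hpow : ∑ m, (∑ n, ‖hR.isHermitian.eigenvectorUnitary m n‖ ^ 2 * θ n) / lam m
      ≤ (Wᴴ * W).trace.re := by
    rw [← RCLike.re_to_complex, re_trace_conjTranspose_mul_self]
    refine sum_le_sum fun m _ => ?_
    rw [hdiag]
    rcases (hlam0 m).eq_or_lt with h | h
    · rw [← h, zero_mul, zero_div]; positivity
    · rw [mul_div_cancel_left₀ _ h.ne']
  rw [conjTranspose_mul_diagonal_mul_eq hlam0, hlog]
  refine (sum_log_one_add_le_of_mem_doublyStochastic hNM hlam hlam0 hμ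
    (norm_sq_mem_doublyStochastic_of_mem_unitaryGroup hR.isHermitian.eigenvectorUnitary.2)
    hR.eigenvalues_nonneg hrank fun m hm => by rw [hdiag, hm, zero_mul]).trans ?_
  gcongr

theorem sum_waterfill_le_re_trace {M N : ℕ} (hNM : N ≤ M) {U : Matrix (Fin M) (Fin M) ℂ}
    (hU : U ∈ unitaryGroup (Fin M) ℂ) {lam : Fin M → ℝ} {μ : ℝ} (hlam : Antitone lam)
    (hlam0 : ∀ m, 0 ≤ lam m) (hμ : 0 < μ) (T : Matrix (Fin M) (Fin N) ℂ)
    (hT : log (∏ n : Fin N, (1 + waterfill μ (lam (Fin.castLE hNM n)) * lam (Fin.castLE hNM n)))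
      ≤ log (1 + Tᴴ * (U * diagonal (fun m => (lam m : ℂ)) * Uᴴ) * T).det.re) :
    ∑ n : Fin N, waterfill μ (lam (Fin.castLE hNM n)) ≤ (Tᴴ * T).trace.re := by
  have hUU : U * Uᴴ = 1 := by rw [← star_eq_conjTranspose, mem_unitaryGroup_iff.mp hU]
  have hdual := log_det_one_add_le hNM hlam hlam0 hμ (Uᴴ * T)
  simp only [conjTranspose_mul, conjTranspose_conjTranspose, Matrix.mul_assoc,
    ← Matrix.mul_assoc U Uᴴ, hUU, Matrix.one_mul, waterfillingDual_mul_eq hμ, sum_sub_distrib,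
    ← sum_div] at hdual
  rw [log_prod fun n _ => by rw [one_add_waterfill_mul]; positivity] at hT
  simp only [Matrix.mul_assoc] at hT
  rw [← div_le_div_iff_of_pos_right hμ]
  linarith

noncomputable def precoder {M N : ℕ} (hNM : N ≤ M) (U : Matrix (Fin M) (Fin M) ℂ) (γ : Fin N → ℝ)
    (S : Matrix (Fin N) (Fin N) ℂ) : Matrix (Fin M) (Fin N) ℂ :=
  U.submatrix id (Fin.castLE hNM) * diagonal (fun n => (√(γ n) : ℂ)) * S

section Precoder
variable {M N : ℕ} (hNM : N ≤ M) {U : Matrix (Fin M) (Fin M) ℂ} {S : Matrix (Fin N) (Fin N) ℂ}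
  {γ : Fin N → ℝ}

lemma conjTranspose_precoder_mul_mul (hU : U ∈ unitaryGroup (Fin M) ℂ) (hγ : ∀ n, 0 ≤ γ n)
    (lam : Fin M → ℝ) :
    (precoder hNM U γ S)ᴴ * (U * diagonal (fun m => (lam m : ℂ)) * Uᴴ) * precoder hNM U γ S
      = Sᴴ * diagonal (fun n => (γ n * lam (Fin.castLE hNM n) : ℂ)) * S := by
  have hUU : Uᴴ * U = 1 := by rw [← star_eq_conjTranspose, mem_unitaryGroup_iff'.mp hU]
  have hUΛU : Uᴴ * (U * diagonal (fun m => (lam m : ℂ)) * Uᴴ) * U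
      = diagonal (fun m => (lam m : ℂ)) := by
    rw [← Matrix.mul_assoc, ← Matrix.mul_assoc, hUU, Matrix.one_mul, Matrix.mul_assoc, hUU,
      Matrix.mul_one]
  calc (precoder hNM U γ S)ᴴ * (U * diagonal (fun m => (lam m : ℂ)) * Uᴴ) * precoder hNM U γ S
      = Sᴴ * ((diagonal fun n => (√(γ n) : ℂ))ᴴ * ((U.submatrix id (Fin.castLE hNM))ᴴ *
          (U * diagonal (fun m => (lam m : ℂ)) * Uᴴ) * U.submatrix id (Fin.castLE hNM)) *
          diagonal fun n => (√(γ n) : ℂ)) * S := by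
        simp only [precoder, conjTranspose_mul, Matrix.mul_assoc]
    _ = Sᴴ * diagonal (fun n => (γ n * lam (Fin.castLE hNM n) : ℂ)) * S := by
        rw [conjTranspose_submatrix_mul_mul_submatrix, hUΛU,
          submatrix_diagonal _ _ (Fin.castLE_injective hNM), diagonal_conjTranspose,
          diagonal_mul_diagonal, diagonal_mul_diagonal]
        refine congrArg (fun d => Sᴴ * diagonal d * S) (funext fun n => ?_)
        simp only [Pi.star_apply, Function.comp_apply, Complex.star_def, Complex.conj_ofReal]
        rw [mul_right_comm, ← Complex.ofReal_mul, mul_self_sqrt (hγ n)]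

lemma det_one_add_precoder (hU : U ∈ unitaryGroup (Fin M) ℂ) (hS : S ∈ unitaryGroup (Fin N) ℂ)
    (hγ : ∀ n, 0 ≤ γ n) (lam : Fin M → ℝ) :
    (1 + (precoder hNM U γ S)ᴴ * (U * diagonal (fun m => (lam m : ℂ)) * Uᴴ) *
      precoder hNM U γ S).det = ((∏ n, (1 + γ n * lam (Fin.castLE hNM n)) : ℝ) : ℂ) := by
  rw [conjTranspose_precoder_mul_mul hNM hU hγ,
    det_one_add_conjTranspose_mul_mul_of_mem_unitaryGroup hS, ← diagonal_one, diagonal_add,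
    det_diagonal]
  push_cast
  rfl

lemma trace_precoder (hU : U ∈ unitaryGroup (Fin M) ℂ) (hS : S ∈ unitaryGroup (Fin N) ℂ)
    (hγ : ∀ n, 0 ≤ γ n) :
    ((precoder hNM U γ S)ᴴ * precoder hNM U γ S).trace = ((∑ n, γ n : ℝ) : ℂ) := by
  have hUU : U * Uᴴ = 1 := by rw [← star_eq_conjTranspose, mem_unitaryGroup_iff.mp hU]
  have := conjTranspose_precoder_mul_mul (S := S) hNM hU hγ 1
  simp only [Pi.one_apply, Complex.ofReal_one, mul_one, diagonal_one, Matrix.mul_one, hUU] at this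
  rw [this, trace_conjTranspose_mul_mul_of_mem_unitaryGroup hS, trace_diagonal]
  push_cast
  rfl

end Precoder

noncomputable def waterLevel (c : ℝ) (lam : ℕ → ℝ) (k : ℕ) : ℝ :=
  (c / ∏ i ∈ range k, lam i) ^ ((1 : ℝ) / k)

section WaterLevel
variable {c : ℝ} {lam : ℕ → ℝ} {k r : ℕ}

lemma waterLevel_pos (hc : 0 < c) (hP : 0 < ∏ i ∈ range k, lam i) : 0 < waterLevel c lam k :=
  rpow_pos_of_pos (div_pos hc hP) _

lemma waterLevel_pow_mul_prod (hc : 0 < c) (hk : k ≠ 0) (hP : 0 < ∏ i ∈ range k, lam i) :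
    waterLevel c lam k ^ k * ∏ i ∈ range k, lam i = c := by
  rw [waterLevel, one_div, rpow_inv_natCast_pow (div_pos hc hP).le hk, div_mul_cancel₀ _ hP.ne']

lemma prod_range_mul_waterLevel (hc : 0 < c) (hk : k ≠ 0) (hP : 0 < ∏ i ∈ range k, lam i) :
    ∏ i ∈ range k, (lam i * waterLevel c lam k) = c := by
  rw [prod_mul_distrib, prod_const, card_range, mul_comm, waterLevel_pow_mul_prod hc hk hP]

lemma waterLevel_pow_mul_prod_Ico (hc : 0 < c) (hk : k ≠ 0) (hkr : k ≤ r)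
    (hpos : ∀ i < r, 0 < lam i) :
    waterLevel c lam r ^ k * ∏ i ∈ Ico k r, (lam i * waterLevel c lam r)
      = waterLevel c lam k ^ k := by
  have hP : ∀ j ≤ r, 0 < ∏ i ∈ range j, lam i := fun j hj =>
    prod_pos fun i hi => hpos i ((mem_range.mp hi).trans_le hj)
  refine mul_right_cancel₀ (hP k hkr).ne' ?_
  rw [waterLevel_pow_mul_prod hc hk (hP k hkr)]
  calc _ = waterLevel c lam r ^ (k + (r - k)) *
        ((∏ i ∈ range k, lam i) * ∏ i ∈ Ico k r, lam i) := by
        rw [prod_mul_distrib, prod_const, Nat.card_Ico, pow_add]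
        ring
    _ = c := by
        rw [Nat.add_sub_cancel' hkr, prod_range_mul_prod_Ico _ hkr,
          waterLevel_pow_mul_prod hc (by omega) (hP r le_rfl)]

lemma waterLevel_le_waterLevel (hc : 0 < c) (hk : k ≠ 0) (hkr : k ≤ r)
    (hpos : ∀ i < r, 0 < lam i) (hge : ∀ i ∈ Ico k r, 1 ≤ lam i * waterLevel c lam r) :
    waterLevel c lam r ≤ waterLevel c lam k := by
  have hP : ∀ j ≤ r, 0 < ∏ i ∈ range j, lam i := fun j hj =>
    prod_pos fun i hi => hpos i ((mem_range.mp hi).trans_le hj)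
  refine (pow_le_pow_iff_left₀ (waterLevel_pos hc (hP r le_rfl)).le
    (waterLevel_pos hc (hP k hkr)).le hk).mp ?_
  rw [← waterLevel_pow_mul_prod_Ico hc hk hkr hpos]
  exact le_mul_of_one_le_right (pow_nonneg (waterLevel_pos hc (hP r le_rfl)).le _) (one_le_prod hge)

lemma one_lt_mul_waterLevel_succ (hc : 0 < c) (hr : r ≠ 0) (hpos : ∀ i < r, 0 < lam i)
    (h : 1 < lam r * waterLevel c lam r) : 1 < lam r * waterLevel c lam (r + 1) := by
  have hμ : 0 < waterLevel c lam r :=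
    waterLevel_pos hc (prod_pos fun i hi => hpos i (mem_range.mp hi))
  have hlr : 0 < lam r := pos_of_mul_pos_left (one_pos.trans h) hμ.le
  have hpos' : ∀ i < r + 1, 0 < lam i := fun i hi =>
    (Nat.lt_succ_iff_lt_or_eq.mp hi).elim (hpos i) (· ▸ hlr)
  have hμ' : 0 < waterLevel c lam (r + 1) :=
    waterLevel_pos hc (prod_pos fun i hi => hpos' i (mem_range.mp hi))
  by_contra! hle
  have key := waterLevel_pow_mul_prod_Ico hc hr r.le_succ hpos'
  rw [Nat.Ico_succ_singleton, prod_singleton] at key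
  have : waterLevel c lam r ≤ waterLevel c lam (r + 1) :=
    (pow_le_pow_iff_left₀ hμ.le hμ'.le hr).mp (key ▸ mul_le_of_le_one_right (by positivity) hle)
  nlinarith

lemma rpow_prod_div_lt_iff (hc : 0 < c) (hP : 0 < ∏ i ∈ range k, lam i) {l : ℝ} :
    ((∏ i ∈ range k, lam i) / c) ^ ((1 : ℝ) / k) < l ↔ 1 < l * waterLevel c lam k := by
  rw [← inv_div, inv_rpow (div_pos hc hP).le]
  exact inv_lt_iff_one_lt_mul₀ (waterLevel_pos hc hP)

end WaterLevel

lemma pos_of_rpow_prod_div_lt {c : ℝ} (hc : 0 < c) {lam : ℕ → ℝ} {r : ℕ}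
    (hnonneg : ∀ i < r, 0 ≤ lam i)
    (hactive : ∀ n < r, ((∏ i ∈ range r, lam i) / c) ^ ((1 : ℝ) / r) < lam n) :
    ∀ n < r, 0 < lam n := fun n hn =>
  (rpow_nonneg (div_nonneg (prod_nonneg fun i hi => hnonneg i (mem_range.mp hi)) hc.le) _).trans_lt
    (hactive n hn)

lemma mul_waterLevel_le_one {M r : ℕ} {c : ℝ} {lam : ℕ → ℝ} (hc : 0 < c)
    (hmono : ∀ i j : ℕ, i ≤ j → j < M → lam j ≤ lam i) (hr : r ≠ 0) (hrM : r < M)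
    (hpos : ∀ i < r, 0 < lam i)
    (hmax : ∀ r', r < r' → r' ≤ M →
      ¬ ∀ n < r', ((∏ i ∈ range r', lam i) / c) ^ ((1 : ℝ) / r') < lam n) :
    lam r * waterLevel c lam r ≤ 1 := by
  by_contra! h
  have hsucc := one_lt_mul_waterLevel_succ hc hr hpos h
  have hP : 0 < ∏ i ∈ range (r + 1), lam i := by
    rw [prod_range_succ]
    exact mul_pos (prod_pos fun i hi => hpos i (mem_range.mp hi))
      (pos_of_mul_pos_left (one_pos.trans h)
        (waterLevel_pos hc (prod_pos fun i hi => hpos i (mem_range.mp hi))).le)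
  refine hmax (r + 1) r.lt_succ_self hrM fun n hn => (rpow_prod_div_lt_iff hc hP).mpr ?_
  exact hsucc.trans_le (mul_le_mul_of_nonneg_right (hmono n r (by omega) hrM)
    (waterLevel_pos hc hP).le)

theorem one_lt_mul_waterLevel_min_iff {M N r : ℕ} {c : ℝ} {lam : ℕ → ℝ} (hc : 0 < c)
    (hmono : ∀ i j : ℕ, i ≤ j → j < M → lam j ≤ lam i) (hNM : N ≤ M) (hr : 0 < r)
    (hpos : ∀ i < r, 0 < lam i)
    (hactive : ∀ n < r, ((∏ i ∈ range r, lam i) / c) ^ ((1 : ℝ) / r) < lam n)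
    (hmax : ∀ r', r < r' → r' ≤ M →
      ¬ ∀ n < r', ((∏ i ∈ range r', lam i) / c) ^ ((1 : ℝ) / r') < lam n)
    {n : ℕ} (hn : n < N) :
    1 < lam n * waterLevel c lam (min N r) ↔ n < min N r := by
  have hPr : 0 < ∏ i ∈ range r, lam i := prod_pos fun i hi => hpos i (mem_range.mp hi)
  have hact : ∀ n < r, 1 < lam n * waterLevel c lam r := fun n hn =>
    (rpow_prod_div_lt_iff hc hPr).mp (hactive n hn)
  constructor
  · intro h
    by_contra! hkn
    have hrN : r < N := by omega
    rw [min_eq_right hrN.le] at h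
    refine h.not_ge ((mul_le_mul_of_nonneg_right (hmono r n (by omega) (by omega))
      (waterLevel_pos hc hPr).le).trans ?_)
    exact mul_waterLevel_le_one hc hmono hr.ne' (hrN.trans_le hNM) hpos hmax
  · intro h
    refine (hact n (by omega)).trans_le (mul_le_mul_of_nonneg_left ?_ (hpos n (by omega)).le)
    exact waterLevel_le_waterLevel hc (by omega) (min_le_right N r) hpos
      fun i hi => (hact i (mem_Ico.mp hi).2).le

lemma prod_range_max_one {N k : ℕ} (hkN : k ≤ N) {f : ℕ → ℝ} (hf : ∀ n < N, 1 < f n ↔ n < k) :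
    ∏ n ∈ range N, max 1 (f n) = ∏ n ∈ range k, f n := by
  rw [← prod_range_mul_prod_Ico _ hkN, prod_eq_one (s := Ico k N) fun n hn => ?_, mul_one]
  · exact prod_congr rfl fun n hn =>
      max_eq_right ((hf n ((mem_range.mp hn).trans_le hkN)).mpr (mem_range.mp hn)).le
  · obtain ⟨hkn, hnN⟩ := mem_Ico.mp hn
    exact max_eq_left (not_lt.mp fun h => absurd ((hf n hnN).mp h) (not_lt.mpr hkn))

lemma ite_eq_waterfill_waterLevel_min {N r n : ℕ} {c : ℝ} {lam : ℕ → ℝ} (hn : n < N)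
    (hiff : 1 < lam n * waterLevel c lam (min N r) ↔ n < min N r) :
    (if N ≤ r then (c / ∏ i ∈ range N, lam i) ^ ((1 : ℝ) / N) - (lam n)⁻¹
      else if n < r then (c / ∏ i ∈ range r, lam i) ^ ((1 : ℝ) / r) - (lam n)⁻¹ else 0)
      = waterfill (waterLevel c lam (min N r)) (lam n) := by
  rw [waterfill, if_congr hiff rfl rfl]
  by_cases hNr : N ≤ r
  · rw [if_pos hNr, min_eq_left hNr, if_pos hn]
    rfl
  · rw [if_neg hNr, min_eq_right (le_of_not_ge hNr)]
    rfl

theorem per_user_inverse_waterfilling_optimal_general {M : ℕ}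
    (A : Matrix (Fin M) (Fin M) ℂ)
    (U : Matrix (Fin M) (Fin M) ℂ) (hU : U ∈ Matrix.unitaryGroup (Fin M) ℂ)
    (lam : ℕ → ℝ)
    (hdecomp : A = U * Matrix.diagonal (fun i : Fin M => ((lam i : ℝ) : ℂ)) * Uᴴ)
    (hmono : ∀ i j : ℕ, i ≤ j → j < M → lam j ≤ lam i)
    (hnonneg : ∀ n < M, 0 ≤ lam n)
    (Info : ℝ)
    (N : ℕ) (hN : 0 < N) (hNM : N ≤ M)
    (r : ℕ) (hr : 0 < r) (hrM : r ≤ M)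
    (hactive : ∀ n < r,
      ((∏ i ∈ Finset.range r, lam i) / 2 ^ Info) ^ ((1 : ℝ) / r) < lam n)
    (hmax : ∀ r', r < r' → r' ≤ M →
      ¬ (∀ n < r',
        ((∏ i ∈ Finset.range r', lam i) / 2 ^ Info) ^ ((1 : ℝ) / r') < lam n))
    (gam : ℕ → ℝ)
    (hgam : ∀ n < N, gam n =
      if N ≤ r then
        (2 ^ Info / ∏ i ∈ Finset.range N, lam i) ^ ((1 : ℝ) / N) - (lam n)⁻¹
      else if n < r then
        (2 ^ Info / ∏ i ∈ Finset.range r, lam i) ^ ((1 : ℝ) / r) - (lam n)⁻¹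
      else 0)
    (S : Matrix (Fin N) (Fin N) ℂ) (hS : S ∈ Matrix.unitaryGroup (Fin N) ℂ)
    (T : Matrix (Fin M) (Fin N) ℂ)
    (hT : T = U.submatrix id (Fin.castLE hNM) *
      Matrix.diagonal (fun n : Fin N => ((Real.sqrt (gam n) : ℝ) : ℂ)) * S) :
    Real.logb 2 ((1 + Tᴴ * A * T).det).re = Info ∧
    ∀ T' : Matrix (Fin M) (Fin N) ℂ,
      Real.logb 2 ((1 + T'ᴴ * A * T').det).re = Info →
      ((Tᴴ * T).trace).re ≤ ((T'ᴴ * T').trace).re := by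
  have hc : (0 : ℝ) < 2 ^ Info := by positivity
  have hpos := pos_of_rpow_prod_div_lt hc (fun i hi => hnonneg i (hi.trans_le hrM)) hactive
  have hPk : 0 < ∏ i ∈ range (min N r), lam i :=
    prod_pos fun i hi => hpos i ((mem_range.mp hi).trans_le (min_le_right N r))
  set μ := waterLevel (2 ^ Info) lam (min N r)
  have hμ : 0 < μ := waterLevel_pos hc hPk
  have hiff : ∀ n < N, 1 < lam n * μ ↔ n < min N r := fun n hn =>
    one_lt_mul_waterLevel_min_iff hc hmono hNM hr hpos hactive hmax hn
  have hγ : ∀ n < N, waterfill μ (lam n) = gam n := fun n hn =>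
    ((hgam n hn).trans (ite_eq_waterfill_waterLevel_min hn (hiff n hn))).symm
  have hγ0 : ∀ n : Fin N, 0 ≤ gam n := fun n => hγ n n.2 ▸ waterfill_nonneg hμ.le _
  have hinfo : ∏ n : Fin N, (1 + gam n * lam n) = 2 ^ Info := by
    rw [Fin.prod_univ_eq_prod_range (fun n => 1 + gam n * lam n),
      prod_congr rfl fun n hn => by rw [← hγ n (mem_range.mp hn), one_add_waterfill_mul],
      prod_range_max_one (min_le_left N r) hiff, prod_range_mul_waterLevel hc (by omega) hPk]
  have hT : T = precoder hNM U (fun n => gam n) S := hT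
  have hdet : logb 2 ((1 + Tᴴ * A * T).det).re = Info := by
    rw [hT, hdecomp, det_one_add_precoder hNM hU hS hγ0, Complex.ofReal_re]
    exact hinfo ▸ logb_rpow two_pos (by norm_num)
  refine ⟨hdet, fun T' hT' => ?_⟩
  have hlog : log (∏ n : Fin N, (1 + waterfill μ (lam n) * lam n))
      = log (1 + T'ᴴ * A * T').det.re := by
    rw [logb, div_eq_iff (log_pos one_lt_two).ne'] at hT'
    simp only [hγ, Fin.is_lt, hinfo, log_rpow two_pos, hT']
  rw [hT, trace_precoder hNM hU hS hγ0, Complex.ofReal_re]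
  simpa only [Fin.val_castLE, hγ, Fin.is_lt] using sum_waterfill_le_re_trace hNM hU
    (fun i j h => hmono i j h j.2) (fun m => hnonneg m m.2) hμ T' (hdecomp ▸ hlog.le)

/-- Per-user inverse water-filling optimality: for a Hermitian
positive semidefinite `A = U Λ Uᴴ` (eigenvalues `λ 0 ≥ … ≥ λ (M-1) ≥ 0`), `𝒾 > 0`,
`N` a positive integer, and `r` the largest integer such that
`λ n > ((∏_{i<r} λ i)/2^𝒾)^(1/r)` for all `n < r`, the precoder `T = U_N Γ^(1/2) S`
(with `Γ` given by the inverse water-filling loadings over the first `min N r` modes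
and `S` any `N × N` unitary) satisfies `log₂ det (I_N + Tᴴ A T) = 𝒾` and minimizes
`tr (T'ᴴ T')` among all `M × N` precoders `T'` with `log₂ det (I_N + T'ᴴ A T') = 𝒾`. -/
theorem per_user_inverse_waterfilling_optimal {M : ℕ}
    (A : Matrix (Fin M) (Fin M) ℂ) (hA : A.PosSemidef)
    (U : Matrix (Fin M) (Fin M) ℂ) (hU : U ∈ Matrix.unitaryGroup (Fin M) ℂ)
    (lam : ℕ → ℝ)
    (hdecomp : A = U * Matrix.diagonal (fun i : Fin M => ((lam i : ℝ) : ℂ)) * Uᴴ)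
    (hmono : ∀ i j : ℕ, i ≤ j → j < M → lam j ≤ lam i)
    (hnonneg : ∀ n < M, 0 ≤ lam n)
    (Info : ℝ) (hI : 0 < Info)
    (N : ℕ) (hN : 0 < N) (hNM : N ≤ M)
    (r : ℕ) (hr : 0 < r) (hrM : r ≤ M)
    (hactive : ∀ n < r,
      ((∏ i ∈ Finset.range r, lam i) / 2 ^ Info) ^ ((1 : ℝ) / r) < lam n)
    (hmax : ∀ r', r < r' → r' ≤ M →
      ¬ (∀ n < r',
        ((∏ i ∈ Finset.range r', lam i) / 2 ^ Info) ^ ((1 : ℝ) / r') < lam n))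
    (gam : ℕ → ℝ)
    (hgam : ∀ n < N, gam n =
      if N ≤ r then
        (2 ^ Info / ∏ i ∈ Finset.range N, lam i) ^ ((1 : ℝ) / N) - (lam n)⁻¹
      else if n < r then
        (2 ^ Info / ∏ i ∈ Finset.range r, lam i) ^ ((1 : ℝ) / r) - (lam n)⁻¹
      else 0)
    (S : Matrix (Fin N) (Fin N) ℂ) (hS : S ∈ Matrix.unitaryGroup (Fin N) ℂ)
    (T : Matrix (Fin M) (Fin N) ℂ)
    (hT : T = U.submatrix id (Fin.castLE hNM) *
      Matrix.diagonal (fun n : Fin N => ((Real.sqrt (gam n) : ℝ) : ℂ)) * S) :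
    Real.logb 2 ((1 + Tᴴ * A * T).det).re = Info ∧
    ∀ T' : Matrix (Fin M) (Fin N) ℂ,
      Real.logb 2 ((1 + T'ᴴ * A * T').det).re = Info →
      ((Tᴴ * T).trace).re ≤ ((T'ᴴ * T').trace).re :=
  per_user_inverse_waterfilling_optimal_general A U hU lam hdecomp hmono hnonneg Info N hN hNM r hr
    hrM hactive hmax gam hgam S hS T hT
end
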